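/- If the Fugitive has a winning strategy in the game Escape(Q₀, 𝒬) — i.e., can reach a final position H (a structure over the red-green alphabet containing a green path from a to b labelled by a word of Q₀, closed under all constraints in 𝒬↔, with no red path from a to b labelled by a word of Q₀) — then 𝒬 does not determine Q₀. -/
import Mathlib


inductive LPath {A V : Type} (E : A → V → V → Prop) : V → List A → V → Prop
  | nil (v : V) : LPath E v [] v
  | cons {u v w : V} {a : A} {l : List A} :
      E a u v → LPath E v l w → LPath E u (a :: l) w

def SatQ {A V : Type} (L : Set (List A)) (E : A → V → V → Prop) (u v : V) : Prop :=
  ∃ w ∈ L, LPath E u w v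

def greenL {A : Type} (L : Set (List A)) : Set (List (A ⊕ A)) :=
  (List.map Sum.inl) '' L

def redL {A : Type} (L : Set (List A)) : Set (List (A ⊕ A)) :=
  (List.map Sum.inr) '' L

def qAns {A V : Type} (L : Set (List A)) (E : A → V → V → Prop) : Set (V × V) :=
  {p | SatQ L E p.1 p.2}

def DeterminesL {A : Type} (Q0 : Set (List A)) (Qs : Set (Set (List A))) : Prop :=
  ∀ (V : Type) (E₁ E₂ : A → V → V → Prop),
    (∀ L ∈ Qs, qAns L E₁ = qAns L E₂) → qAns Q0 E₁ = qAns Q0 E₂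


lemma lpath_map {A B V : Type} (f : A → B) (E : B → V → V → Prop)
    (u v : V) (w : List A) :
    LPath (fun x => E (f x)) u w v ↔ LPath E u (w.map f) v := by
  constructor
  · intro h
    induction h with
    | nil => exact LPath.nil _
    | cons he _ ih => exact LPath.cons he ih
  · intro h
    induction w generalizing u with
    | nil => cases h; exact LPath.nil _
    | cons x xs ih => cases h with
      | cons he ht => exact LPath.cons he (ih _ ht)

lemma satq_green {A V : Type} (L : Set (List A)) (H : (A ⊕ A) → V → V → Prop)
    (u v : V) : SatQ L (fun x => H (Sum.inl x)) u v ↔ SatQ (greenL L) H u v := by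
  constructor
  · rintro ⟨w, hw, hp⟩
    exact ⟨w.map Sum.inl, ⟨w, hw, rfl⟩, (lpath_map Sum.inl H u v w).1 hp⟩
  · rintro ⟨_, ⟨w, hw, rfl⟩, hp⟩
    exact ⟨w, hw, (lpath_map Sum.inl H u v w).2 hp⟩

lemma satq_red {A V : Type} (L : Set (List A)) (H : (A ⊕ A) → V → V → Prop)
    (u v : V) : SatQ L (fun x => H (Sum.inr x)) u v ↔ SatQ (redL L) H u v := by
  constructor
  · rintro ⟨w, hw, hp⟩
    exact ⟨w.map Sum.inr, ⟨w, hw, rfl⟩, (lpath_map Sum.inr H u v w).1 hp⟩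
  · rintro ⟨_, ⟨w, hw, rfl⟩, hp⟩
    exact ⟨w, hw, (lpath_map Sum.inr H u v w).2 hp⟩

/-- if the Fugitive can reach a winning final position `H` in
Escape(Q₀, 𝒬) — a structure over the red-green alphabet with a green `Q₀`-path
from `a` to `b`, closed under all constraints of `𝒬↔` (no unsatisfied
requests), and with no red `Q₀`-path from `a` to `b` — then `𝒬` does not
determine `Q₀`. -/
theorem fugitive_win_implies_non_determinacy {A : Type}
    (Q0 : Set (List A)) (Qs : Set (Set (List A)))
    (hQ0fin : Q0.Finite) (hQsfin : ∀ L ∈ Qs, L.Finite)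
    (V : Type) (H : (A ⊕ A) → V → V → Prop) (a b : V)
    (hclosed : ∀ L ∈ Qs, ∀ x y : V,
      (SatQ (greenL L) H x y → SatQ (redL L) H x y) ∧
      (SatQ (redL L) H x y → SatQ (greenL L) H x y))
    (hg : SatQ (greenL Q0) H a b) (hr : ¬ SatQ (redL Q0) H a b) :
    ¬ DeterminesL Q0 Qs := by
  intro hdet
  have h := hdet V (fun x => H (Sum.inl x)) (fun x => H (Sum.inr x)) ?_
  · have hab : (a, b) ∈ qAns Q0 (fun x => H (Sum.inl x)) :=
      (satq_green Q0 H a b).2 hg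
    rw [h] at hab
    exact hr ((satq_red Q0 H a b).1 hab)
  · intro L hL
    ext ⟨x, y⟩
    constructor
    · intro hx
      exact (satq_red L H x y).2 ((hclosed L hL x y).1 ((satq_green L H x y).1 hx))
    · intro hx
      exact (satq_green L H x y).2 ((hclosed L hL x y).2 ((satq_red L H x y).1 hx))
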